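/- Let p be a prime, n_p ≥ 1 an integer, and τ ∈ GL₂(ℤ_p). Then: (i) for every γ ∈ K₀(p^{n_p}) and every ν ∈ N(ℤ_p), c_p(γτν) = c_p(τ) and w_p(γτν) = w_p(τ); (ii) there exist γ ∈ K₀(p^{n_p}), ν ∈ N(ℤ_p) and v ∈ ℤ_p^× such that γτν is the matrix (1 0; p^{c_p(τ)} v). -/
import Mathlib

open Matrix

/-- For `τ ∈ GL₂(ℤ_p)` with lower-left entry `c`, `cP p n τ = min(v_p(c), n)`,
realized as the largest `k ≤ n` with `p^k ∣ c`. -/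
noncomputable def cP (p : ℕ) [Fact p.Prime] (n : ℕ)
    (τ : GL (Fin 2) ℤ_[p]) : ℕ :=
  sSup {k | k ≤ n ∧ (p : ℤ_[p]) ^ k ∣ (τ : Matrix (Fin 2) (Fin 2) ℤ_[p]) 1 0}

/-- `wP p n τ = max(n − 2 cP p n τ, 0)` (truncated subtraction). -/
noncomputable def wP (p : ℕ) [Fact p.Prime] (n : ℕ)
    (τ : GL (Fin 2) ℤ_[p]) : ℕ :=
  n - 2 * cP p n τ

section Aux

variable {p : ℕ} [Fact p.Prime]

lemma isUnit_of_not_dvd' {z : ℤ_[p]} (h : ¬ (p : ℤ_[p]) ∣ z) : IsUnit z := by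
  by_contra hu
  exact h ((PadicInt.norm_lt_one_iff_dvd z).mp (PadicInt.not_isUnit_iff.mp hu))

lemma not_isUnit_of_dvd' {z : ℤ_[p]} (h : (p : ℤ_[p]) ∣ z) : ¬ IsUnit z := by
  rw [PadicInt.not_isUnit_iff, PadicInt.norm_lt_one_iff_dvd]; exact h

noncomputable def mkUnip (x : ℤ_[p]) : GL (Fin 2) ℤ_[p] :=
  ⟨!![1, x; 0, 1], !![1, -x; 0, 1],
    by rw [Matrix.mul_fin_two, Matrix.one_fin_two]; norm_num,
    by rw [Matrix.mul_fin_two, Matrix.one_fin_two]; norm_num⟩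

noncomputable def mkLow (k : ℕ) (v : ℤ_[p]ˣ) : GL (Fin 2) ℤ_[p] :=
  ⟨!![1, 0; (p : ℤ_[p]) ^ k, (v : ℤ_[p])],
   !![1, 0; -((p : ℤ_[p]) ^ k * (↑v⁻¹ : ℤ_[p])), (↑v⁻¹ : ℤ_[p])],
    by rw [Matrix.mul_fin_two, Matrix.one_fin_two]
       have h1 : (v : ℤ_[p]) * ↑v⁻¹ = 1 := by
         rw [← Units.val_mul, mul_inv_cancel, Units.val_one]
       congr 1 <;> simp <;> ring_nf <;> simp [h1] <;> ring,
    by rw [Matrix.mul_fin_two, Matrix.one_fin_two]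
       have h1 : (↑v⁻¹ : ℤ_[p]) * ↑v = 1 := by
         rw [← Units.val_mul, inv_mul_cancel, Units.val_one]
       congr 1 <;> simp <;> ring_nf <;> simp [h1] <;> ring⟩

lemma mkUnip_val (x : ℤ_[p]) :
    ((mkUnip x : GL (Fin 2) ℤ_[p]) : Matrix (Fin 2) (Fin 2) ℤ_[p]) = !![1, x; 0, 1] := rfl

lemma mkUnip_inv_val (x : ℤ_[p]) :
    (((mkUnip x)⁻¹ : GL (Fin 2) ℤ_[p]) : Matrix (Fin 2) (Fin 2) ℤ_[p]) = !![1, -x; 0, 1] := rfl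

lemma mkLow_val (k : ℕ) (v : ℤ_[p]ˣ) :
    ((mkLow k v : GL (Fin 2) ℤ_[p]) : Matrix (Fin 2) (Fin 2) ℤ_[p]) =
      !![1, 0; (p : ℤ_[p]) ^ k, (v : ℤ_[p])] := rfl

lemma key_entry (τ : GL (Fin 2) ℤ_[p]) (k : ℕ) (v : ℤ_[p]ˣ) (x : ℤ_[p])
    (hdet : IsUnit ((τ : Matrix (Fin 2) (Fin 2) ℤ_[p]).det)) :
    ((↑(mkLow k v * (mkUnip x)⁻¹ * τ⁻¹) : Matrix (Fin 2) (Fin 2) ℤ_[p]) 1 0) =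
      (↑hdet.unit⁻¹ : ℤ_[p]) *
        ((p : ℤ_[p]) ^ k * ((τ : Matrix (Fin 2) (Fin 2) ℤ_[p]) 1 1)
          - (v : ℤ_[p]) * ((τ : Matrix (Fin 2) (Fin 2) ℤ_[p]) 1 0)
          + (p : ℤ_[p]) ^ k * x * ((τ : Matrix (Fin 2) (Fin 2) ℤ_[p]) 1 0)) := by
  rw [Units.val_mul, Units.val_mul, mkUnip_inv_val, mkLow_val, Matrix.coe_units_inv,
    Matrix.inv_def, Matrix.adjugate_fin_two]
  have h := Ring.inverse_unit hdet.unit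
  rw [hdet.unit_spec] at h
  rw [h]
  simp [Matrix.mul_apply, Fin.sum_univ_two, Matrix.smul_apply, smul_eq_mul]
  ring

end Aux

theorem stmt_1 (p : ℕ) [Fact p.Prime] (n : ℕ) (hn : 1 ≤ n)
    (τ : GL (Fin 2) ℤ_[p]) :
    (∀ γ ν : GL (Fin 2) ℤ_[p],
      (p : ℤ_[p]) ^ n ∣ (γ : Matrix (Fin 2) (Fin 2) ℤ_[p]) 1 0 →
      ((ν : Matrix (Fin 2) (Fin 2) ℤ_[p]) 0 0 = 1 ∧
        (ν : Matrix (Fin 2) (Fin 2) ℤ_[p]) 1 0 = 0 ∧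
        (ν : Matrix (Fin 2) (Fin 2) ℤ_[p]) 1 1 = 1) →
      cP p n (γ * τ * ν) = cP p n τ ∧ wP p n (γ * τ * ν) = wP p n τ) ∧
    (∃ (γ ν : GL (Fin 2) ℤ_[p]) (v : ℤ_[p]ˣ),
      (p : ℤ_[p]) ^ n ∣ (γ : Matrix (Fin 2) (Fin 2) ℤ_[p]) 1 0 ∧
      ((ν : Matrix (Fin 2) (Fin 2) ℤ_[p]) 0 0 = 1 ∧
        (ν : Matrix (Fin 2) (Fin 2) ℤ_[p]) 1 0 = 0 ∧
        (ν : Matrix (Fin 2) (Fin 2) ℤ_[p]) 1 1 = 1) ∧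
      ((γ * τ * ν : GL (Fin 2) ℤ_[p]) : Matrix (Fin 2) (Fin 2) ℤ_[p]) =
        !![1, 0; (p : ℤ_[p]) ^ cP p n τ, (v : ℤ_[p])]) := by
  have hdet : IsUnit ((τ : Matrix (Fin 2) (Fin 2) ℤ_[p]).det) :=
    (Matrix.isUnit_iff_isUnit_det _).mp τ.isUnit
  constructor
  · -- part (i)
    rintro γ ν hγ ⟨hν00, hν10, -⟩
    have hγdet : IsUnit ((γ : Matrix (Fin 2) (Fin 2) ℤ_[p]).det) :=
      (Matrix.isUnit_iff_isUnit_det _).mp γ.isUnit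
    rw [Matrix.det_fin_two] at hγdet
    have hpγ : (p : ℤ_[p]) ∣ (γ : Matrix (Fin 2) (Fin 2) ℤ_[p]) 1 0 :=
      dvd_trans (dvd_pow_self (p : ℤ_[p]) (by omega)) hγ
    have h11 : IsUnit ((γ : Matrix (Fin 2) (Fin 2) ℤ_[p]) 1 1) := by
      rcases IsLocalRing.isUnit_or_isUnit_of_isUnit_add
          (show IsUnit ((γ : Matrix (Fin 2) (Fin 2) ℤ_[p]) 0 0 *
            (γ : Matrix (Fin 2) (Fin 2) ℤ_[p]) 1 1 +
            -((γ : Matrix (Fin 2) (Fin 2) ℤ_[p]) 0 1 *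
              (γ : Matrix (Fin 2) (Fin 2) ℤ_[p]) 1 0)) by
            rwa [← sub_eq_add_neg]) with h | h
      · exact isUnit_of_mul_isUnit_right h
      · exact absurd ((IsUnit.neg_iff _).mp h)
          (not_isUnit_of_dvd' (hpγ.mul_left _))
    have hentry : ((γ * τ * ν : GL (Fin 2) ℤ_[p]) : Matrix (Fin 2) (Fin 2) ℤ_[p]) 1 0 =
        (γ : Matrix (Fin 2) (Fin 2) ℤ_[p]) 1 0 * (τ : Matrix (Fin 2) (Fin 2) ℤ_[p]) 0 0 +
        (γ : Matrix (Fin 2) (Fin 2) ℤ_[p]) 1 1 * (τ : Matrix (Fin 2) (Fin 2) ℤ_[p]) 1 0 := by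
      rw [Units.val_mul, Units.val_mul]
      simp [Matrix.mul_apply, Fin.sum_univ_two, hν00, hν10]
    have h1 : cP p n (γ * τ * ν) = cP p n τ := by
      unfold cP
      congr 1
      ext k
      simp only [Set.mem_setOf_eq, hentry]
      refine and_congr_right fun hk => ?_
      rw [dvd_add_right ((dvd_trans (pow_dvd_pow _ hk) hγ).mul_right _),
        h11.dvd_mul_left]
    exact ⟨h1, by unfold wP; rw [h1]⟩
  · -- part (ii)
    have hBdd : BddAbove {k | k ≤ n ∧ (p : ℤ_[p]) ^ k ∣
        (τ : Matrix (Fin 2) (Fin 2) ℤ_[p]) 1 0} := ⟨n, fun k hk => hk.1⟩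
    have hne : {k | k ≤ n ∧ (p : ℤ_[p]) ^ k ∣
        (τ : Matrix (Fin 2) (Fin 2) ℤ_[p]) 1 0}.Nonempty := ⟨0, Nat.zero_le n, by simp⟩
    have hmem : cP p n τ ≤ n ∧ (p : ℤ_[p]) ^ (cP p n τ) ∣
        (τ : Matrix (Fin 2) (Fin 2) ℤ_[p]) 1 0 := Nat.sSup_mem hne hBdd
    have hdet2 : (↑hdet.unit : ℤ_[p]) =
        (τ : Matrix (Fin 2) (Fin 2) ℤ_[p]) 0 0 * (τ : Matrix (Fin 2) (Fin 2) ℤ_[p]) 1 1 -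
        (τ : Matrix (Fin 2) (Fin 2) ℤ_[p]) 0 1 * (τ : Matrix (Fin 2) (Fin 2) ℤ_[p]) 1 0 := by
      rw [hdet.unit_spec, Matrix.det_fin_two]
    by_cases hc : (p : ℤ_[p]) ^ n ∣ (τ : Matrix (Fin 2) (Fin 2) ℤ_[p]) 1 0
    · -- cP = n, top-left must be a unit
      have hkn : cP p n τ = n :=
        le_antisymm (csSup_le hne fun k hk => hk.1) (le_csSup hBdd ⟨le_refl n, hc⟩)
      have hcnu : ¬ IsUnit ((τ : Matrix (Fin 2) (Fin 2) ℤ_[p]) 1 0) :=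
        not_isUnit_of_dvd' (dvd_trans (dvd_pow_self _ (by omega)) hc)
      have ha : IsUnit ((τ : Matrix (Fin 2) (Fin 2) ℤ_[p]) 0 0) := by
        rcases IsLocalRing.isUnit_or_isUnit_of_isUnit_add
            (show IsUnit ((τ : Matrix (Fin 2) (Fin 2) ℤ_[p]) 0 0 *
              (τ : Matrix (Fin 2) (Fin 2) ℤ_[p]) 1 1 +
              -((τ : Matrix (Fin 2) (Fin 2) ℤ_[p]) 0 1 *
                (τ : Matrix (Fin 2) (Fin 2) ℤ_[p]) 1 0)) by
              rw [← sub_eq_add_neg, ← Matrix.det_fin_two]; exact hdet) with h | h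
        · exact isUnit_of_mul_isUnit_left h
        · exact absurd (isUnit_of_mul_isUnit_right ((IsUnit.neg_iff _).mp h)) hcnu
      set x : ℤ_[p] := -((τ : Matrix (Fin 2) (Fin 2) ℤ_[p]) 0 1 * ↑ha.unit⁻¹) with hx
      refine ⟨mkLow (cP p n τ) 1 * (mkUnip x)⁻¹ * τ⁻¹, mkUnip x, 1, ?_, ⟨rfl, rfl, rfl⟩, ?_⟩
      · rw [key_entry τ _ _ _ hdet]
        refine Dvd.dvd.mul_left ?_ _
        refine dvd_add (dvd_sub ?_ ?_) ?_
        · rw [hkn]; exact dvd_mul_right _ _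
        · exact hc.mul_left _
        · rw [hkn]; exact dvd_mul_of_dvd_left (dvd_mul_right _ _) _
      · have hg : mkLow (cP p n τ) 1 * (mkUnip x)⁻¹ * τ⁻¹ * τ * mkUnip x =
            mkLow (cP p n τ) 1 := by group
        rw [hg, mkLow_val]
    · -- cP < n, lower-left = p^k * unit
      obtain ⟨r, hr⟩ := hmem.2
      have hklt : cP p n τ < n := lt_of_le_of_ne hmem.1 fun h => hc (h ▸ hmem.2)
      have hrunit : IsUnit r := by
        apply isUnit_of_not_dvd'
        rintro ⟨s, hs⟩
        have hdvd : (p : ℤ_[p]) ^ (cP p n τ + 1) ∣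
            (τ : Matrix (Fin 2) (Fin 2) ℤ_[p]) 1 0 := ⟨s, by rw [hr, hs]; ring⟩
        have : cP p n τ + 1 ≤ cP p n τ := le_csSup hBdd ⟨by omega, hdvd⟩
        omega
      have hr1 : r * (↑hrunit.unit⁻¹ : ℤ_[p]) = 1 := hrunit.mul_val_inv
      by_cases ha : IsUnit ((τ : Matrix (Fin 2) (Fin 2) ℤ_[p]) 0 0)
      · -- top-left a unit
        have ha1 : (τ : Matrix (Fin 2) (Fin 2) ℤ_[p]) 0 0 * (↑ha.unit⁻¹ : ℤ_[p]) = 1 := ha.mul_val_inv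
        set x : ℤ_[p] := -((τ : Matrix (Fin 2) (Fin 2) ℤ_[p]) 0 1 * ↑ha.unit⁻¹) with hx
        set v : ℤ_[p]ˣ := hdet.unit * ha.unit⁻¹ * hrunit.unit⁻¹ with hv
        refine ⟨mkLow (cP p n τ) v * (mkUnip x)⁻¹ * τ⁻¹, mkUnip x, v, ?_, ⟨rfl, rfl, rfl⟩, ?_⟩
        · rw [key_entry τ _ _ _ hdet]
          have hzero : (p : ℤ_[p]) ^ (cP p n τ) * ((τ : Matrix (Fin 2) (Fin 2) ℤ_[p]) 1 1)
              - (v : ℤ_[p]) * ((τ : Matrix (Fin 2) (Fin 2) ℤ_[p]) 1 0)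
              + (p : ℤ_[p]) ^ (cP p n τ) * x * ((τ : Matrix (Fin 2) (Fin 2) ℤ_[p]) 1 0) = 0 := by
            rw [hv, hx, hr, Units.val_mul, Units.val_mul, hdet2, hr]
            linear_combination
              (-((p : ℤ_[p]) ^ (cP p n τ) * (τ : Matrix (Fin 2) (Fin 2) ℤ_[p]) 1 1)) * ha1 +
              (-((τ : Matrix (Fin 2) (Fin 2) ℤ_[p]) 0 0 * (τ : Matrix (Fin 2) (Fin 2) ℤ_[p]) 1 1
                * (↑ha.unit⁻¹ : ℤ_[p]) * (p : ℤ_[p]) ^ (cP p n τ)) +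
               (τ : Matrix (Fin 2) (Fin 2) ℤ_[p]) 0 1 * ((p : ℤ_[p]) ^ (cP p n τ)) ^ 2
                * (↑ha.unit⁻¹ : ℤ_[p]) * r) * hr1
          rw [hzero, mul_zero]; exact dvd_zero _
        · have hg : mkLow (cP p n τ) v * (mkUnip x)⁻¹ * τ⁻¹ * τ * mkUnip x =
              mkLow (cP p n τ) v := by group
          rw [hg, mkLow_val]
      · -- top-left not a unit: lower-left is a unit, cP = 0
        have hcu : IsUnit ((τ : Matrix (Fin 2) (Fin 2) ℤ_[p]) 1 0) := by
          rcases IsLocalRing.isUnit_or_isUnit_of_isUnit_add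
              (show IsUnit ((τ : Matrix (Fin 2) (Fin 2) ℤ_[p]) 0 0 *
                (τ : Matrix (Fin 2) (Fin 2) ℤ_[p]) 1 1 +
                -((τ : Matrix (Fin 2) (Fin 2) ℤ_[p]) 0 1 *
                  (τ : Matrix (Fin 2) (Fin 2) ℤ_[p]) 1 0)) by
                rw [← sub_eq_add_neg, ← Matrix.det_fin_two]; exact hdet) with h | h
          · exact absurd (isUnit_of_mul_isUnit_left h) ha
          · exact isUnit_of_mul_isUnit_right ((IsUnit.neg_iff _).mp h)
        have hk0 : cP p n τ = 0 := by
          by_contra h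
          exact not_isUnit_of_dvd'
            (dvd_trans (dvd_pow_self (p : ℤ_[p]) h) hmem.2) hcu
        have hc1 : (τ : Matrix (Fin 2) (Fin 2) ℤ_[p]) 1 0 * (↑hcu.unit⁻¹ : ℤ_[p]) = 1 := hcu.mul_val_inv
        set x : ℤ_[p] := (1 - (τ : Matrix (Fin 2) (Fin 2) ℤ_[p]) 1 1) * ↑hcu.unit⁻¹ with hx
        refine ⟨mkLow (cP p n τ) hcu.unit⁻¹ * (mkUnip x)⁻¹ * τ⁻¹, mkUnip x, hcu.unit⁻¹,
          ?_, ⟨rfl, rfl, rfl⟩, ?_⟩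
        · rw [key_entry τ _ _ _ hdet]
          have hzero : (p : ℤ_[p]) ^ (cP p n τ) * ((τ : Matrix (Fin 2) (Fin 2) ℤ_[p]) 1 1)
              - (↑hcu.unit⁻¹ : ℤ_[p]) * ((τ : Matrix (Fin 2) (Fin 2) ℤ_[p]) 1 0)
              + (p : ℤ_[p]) ^ (cP p n τ) * x * ((τ : Matrix (Fin 2) (Fin 2) ℤ_[p]) 1 0) = 0 := by
            rw [hk0, hx, pow_zero]
            linear_combination (-((τ : Matrix (Fin 2) (Fin 2) ℤ_[p]) 1 1)) * hc1
          rw [hzero, mul_zero]; exact dvd_zero _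
        · have hg : mkLow (cP p n τ) hcu.unit⁻¹ * (mkUnip x)⁻¹ * τ⁻¹ * τ * mkUnip x =
              mkLow (cP p n τ) hcu.unit⁻¹ := by group
          rw [hg, mkLow_val]
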